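/- arXiv:1502.04215 — 3 statements merged into one kernel-verified Lean document; each statement's English description precedes it below -/
import Mathlib

section
/- Let n ≥ 2 be an integer, let λ = 2cos(π/(2n)), and set P = [[1, λ],[0,1]] and S = [[0,1],[-1,0]] in SL(2,ℝ). Then (P·S)^{2n} = −I, and (P·S)^k ≠ ±I for every integer 1 ≤ k < 2n. In particular the image of PS in PSL(2,ℝ) has order exactly 2n. -/
open Matrix Real

/-- With λ = 2cos(π/(2n)), P = [[1,λ],[0,1]] and S = [[0,1],[-1,0]] in SL(2,ℝ):
(PS)^{2n} = −I, (PS)^k ≠ ±I for 1 ≤ k < 2n, and the image of PS in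
PSL(2,ℝ) = SL(2,ℝ)/center has order exactly 2n. -/
theorem PS_order (n : ℕ) (hn : 2 ≤ n) (P S : Matrix.SpecialLinearGroup (Fin 2) ℝ)
    (hP : (P : Matrix (Fin 2) (Fin 2) ℝ) = !![1, 2 * Real.cos (π / (2 * n)); 0, 1])
    (hS : (S : Matrix (Fin 2) (Fin 2) ℝ) = !![0, 1; -1, 0]) :
    (((P * S) ^ (2 * n) : Matrix.SpecialLinearGroup (Fin 2) ℝ) :
        Matrix (Fin 2) (Fin 2) ℝ) = -1 ∧
    (∀ k : ℕ, 1 ≤ k → k < 2 * n →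
      (((P * S) ^ k : Matrix.SpecialLinearGroup (Fin 2) ℝ) :
          Matrix (Fin 2) (Fin 2) ℝ) ≠ 1 ∧
      (((P * S) ^ k : Matrix.SpecialLinearGroup (Fin 2) ℝ) :
          Matrix (Fin 2) (Fin 2) ℝ) ≠ -1) ∧
    orderOf ((QuotientGroup.mk (P * S)) :
      Matrix.SpecialLinearGroup (Fin 2) ℝ ⧸
        Subgroup.center (Matrix.SpecialLinearGroup (Fin 2) ℝ)) = 2 * n := by
  have hnR : (2:ℝ) ≤ (n:ℝ) := by exact_mod_cast hn
  have hnpos : (0:ℝ) < (n:ℝ) := by linarith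
  set θ : ℝ := π - π / (2 * n) with hθ
  have hβpos : 0 < π / (2 * n) := by positivity
  have hβlt : π / (2 * n) < π := by
    rw [div_lt_iff₀ (by linarith)]; nlinarith [pi_pos]
  have hsinθ : Real.sin θ = Real.sin (π / (2 * n)) := Real.sin_pi_sub _
  have hs0 : 0 < Real.sin θ := by
    rw [hsinθ]; exact Real.sin_pos_of_pos_of_lt_pi hβpos hβlt
  have hcosθ : Real.cos θ = -Real.cos (π / (2 * n)) := Real.cos_pi_sub _
  set M : Matrix (Fin 2) (Fin 2) ℝ := ((P * S : Matrix.SpecialLinearGroup (Fin 2) ℝ) :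
      Matrix (Fin 2) (Fin 2) ℝ) with hMdef
  have hM : M = !![-(2 * Real.cos (π / (2 * n))), 1; -1, 0] := by
    rw [hMdef, Matrix.SpecialLinearGroup.coe_mul, hP, hS, Matrix.mul_fin_two]
    norm_num
  have hM2 : M * M = (2 * Real.cos θ) • M - 1 := by
    rw [hM, hcosθ]
    ext i j
    fin_cases i <;> fin_cases j <;>
      simp [Matrix.mul_apply, Fin.sum_univ_two, Matrix.one_apply] <;> ring
  set a : ℕ → ℝ := fun k => Real.sin (k * θ) / Real.sin θ with ha
  have ha0 : a 0 = 0 := by simp [ha]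
  have ha1 : a 1 = 1 := by simp [ha, div_self hs0.ne']
  have harec : ∀ k : ℕ, a (k + 2) = 2 * Real.cos θ * a (k + 1) - a k := by
    intro k
    have htrig : ∀ x y : ℝ, Real.sin (x + 2 * y)
        = 2 * Real.cos y * Real.sin (x + y) - Real.sin x := by
      intro x y
      have e1 : Real.sin (x + 2 * y)
          = Real.sin (x + y) * Real.cos y + Real.cos (x + y) * Real.sin y := by
        rw [← Real.sin_add]; congr 1; ring
      have e2 : Real.sin x
          = Real.sin (x + y) * Real.cos y - Real.cos (x + y) * Real.sin y := by
        rw [← Real.sin_sub]; congr 1; ring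
      rw [e1, e2]; ring
    simp only [ha]
    push_cast
    rw [show ((k:ℝ) + 2) * θ = (k:ℝ) * θ + 2 * θ from by ring,
      show ((k:ℝ) + 1) * θ = (k:ℝ) * θ + θ from by ring, htrig ((k:ℝ) * θ) θ]
    ring
  have key : ∀ k : ℕ, (((P * S) ^ (k + 1) : Matrix.SpecialLinearGroup (Fin 2) ℝ) :
      Matrix (Fin 2) (Fin 2) ℝ) = a (k + 1) • M - a k • 1 := by
    intro k
    induction k with
    | zero => simp [ha0, ha1, hMdef]
    | succ k ih =>
      rw [pow_succ, Matrix.SpecialLinearGroup.coe_mul, ih, ← hMdef]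
      rw [sub_mul, smul_mul_assoc, smul_mul_assoc, one_mul, hM2, harec k]
      rw [smul_sub]
      module
  -- part 1
  have h2n1 : 2 * n - 1 + 1 = 2 * n := by omega
  have hsin2n : Real.sin ((2 * n : ℕ) * θ) = 0 := by
    have : ((2 * n : ℕ) : ℝ) * θ = ((2 * n - 1 : ℤ) : ℝ) * π := by
      push_cast [hθ]
      field_simp
    rw [this]
    exact Real.sin_int_mul_pi _
  have hsin2n1 : Real.sin ((2 * n - 1 : ℕ) * θ) = Real.sin θ := by
    have : ((2 * n - 1 : ℕ) : ℝ) * θ = π / (2 * n) + ((n - 1 : ℤ) : ℝ) * (2 * π) := by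
      push_cast [hθ, Nat.cast_sub (by omega : 1 ≤ 2 * n)]
      field_simp
      ring
    rw [this, Real.sin_add_int_mul_two_pi, hsinθ]
  have part1 : (((P * S) ^ (2 * n) : Matrix.SpecialLinearGroup (Fin 2) ℝ) :
      Matrix (Fin 2) (Fin 2) ℝ) = -1 := by
    have := key (2 * n - 1)
    rw [h2n1] at this
    rw [this]
    have hA : a (2 * n) = 0 := by simp only [ha]; rw [hsin2n, zero_div]
    have hB : a (2 * n - 1) = 1 := by simp only [ha]; rw [hsin2n1, div_self hs0.ne']
    rw [hA, hB]
    simp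
  -- part 2
  have hsink : ∀ k : ℕ, 1 ≤ k → k < 2 * n → Real.sin (k * θ) ≠ 0 := by
    intro k hk1 hk2 hzero
    obtain ⟨m, hm⟩ := Real.sin_eq_zero_iff.mp hzero
    have hkR : ((k:ℝ) * θ) = (k:ℝ) * π - (k:ℝ) * π / (2 * n) := by rw [hθ]; ring
    have hπ : (0:ℝ) < π := pi_pos
    have hmul : ((k:ℝ) - m) * π = ((k:ℝ) / (2 * n)) * π := by
      have h := hm
      rw [hkR] at h
      linear_combination -h
    have hval : (k:ℝ) - m = (k:ℝ) / (2 * n) := mul_right_cancel₀ hπ.ne' hmul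
    have h0 : (0:ℝ) < (k:ℝ) - m := by
      rw [hval]; apply div_pos (by exact_mod_cast hk1) (by linarith)
    have h1 : (k:ℝ) - m < 1 := by
      rw [hval, div_lt_one (by linarith)]; exact_mod_cast hk2
    have hc0 : (0:ℤ) < (k:ℤ) - m := by exact_mod_cast h0
    have hc1 : (1:ℤ) ≤ (k:ℤ) - m := hc0
    have : (1:ℝ) ≤ (k:ℝ) - m := by exact_mod_cast hc1
    linarith
  have part2 : ∀ k : ℕ, 1 ≤ k → k < 2 * n →
      (((P * S) ^ k : Matrix.SpecialLinearGroup (Fin 2) ℝ) :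
          Matrix (Fin 2) (Fin 2) ℝ) ≠ 1 ∧
      (((P * S) ^ k : Matrix.SpecialLinearGroup (Fin 2) ℝ) :
          Matrix (Fin 2) (Fin 2) ℝ) ≠ -1 := by
    intro k hk1 hk2
    have hk : k - 1 + 1 = k := by omega
    have hkey := key (k - 1)
    rw [hk] at hkey
    have hak : a k ≠ 0 := by
      simp only [ha]
      exact div_ne_zero (hsink k hk1 hk2) hs0.ne'
    have hentry : (((P * S) ^ k : Matrix.SpecialLinearGroup (Fin 2) ℝ) :
        Matrix (Fin 2) (Fin 2) ℝ) 1 0 = -a k := by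
      rw [hkey, hM]
      simp [Matrix.one_apply]
    constructor
    · intro h
      rw [h] at hentry
      simp [Matrix.one_apply] at hentry
      exact hak hentry
    · intro h
      rw [h] at hentry
      simp [Matrix.one_apply] at hentry
      exact hak hentry
  refine ⟨part1, part2, ?_⟩
  -- part 3
  rw [orderOf_eq_iff (by omega)]
  constructor
  · rw [← QuotientGroup.mk_pow, QuotientGroup.eq_one_iff]
    rw [Matrix.SpecialLinearGroup.mem_center_iff]
    refine ⟨-1, by norm_num, ?_⟩
    ext i j
    rw [part1]
    fin_cases i <;> fin_cases j <;> simp [Matrix.one_apply]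
  · intro m hm hm0 hcontra
    rw [← QuotientGroup.mk_pow, QuotientGroup.eq_one_iff,
      Matrix.SpecialLinearGroup.mem_center_iff] at hcontra
    obtain ⟨r, hr2, hr⟩ := hcontra
    simp only [Fintype.card_fin] at hr2
    have hr' : r = 1 ∨ r = -1 := by
      rcases mul_eq_zero.mp (by linear_combination hr2 : (r - 1) * (r + 1) = (0:ℝ)) with h | h
      · left; linarith
      · right; linarith
    obtain ⟨hne1, hne2⟩ := part2 m hm0 hm
    rcases hr' with rfl | rfl
    · exact hne1 (by rw [← hr]; simp)
    · refine hne2 (by rw [← hr]; ext i j; fin_cases i <;> fin_cases j <;> simp)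
end

section
/- Let n ≥ 2 and let G = ⟨a, b | (ab)^n⟩. Then the element ab has order exactly n in G. -/
/-- The relator (ab)^n in the free group on two generators
(`false` = a, `true` = b). -/
def heckoidRel (n : ℕ) : FreeGroup Bool :=
  (FreeGroup.of false * FreeGroup.of true) ^ n

/-- The one-relator group G = ⟨a, b | (ab)^n⟩. -/
abbrev HeckoidGroup (n : ℕ) : Type :=
  PresentedGroup ({heckoidRel n} : Set (FreeGroup Bool))

/-!
The relator gives `(ab)^n = 1`, so the order of `ab` divides `n`. Conversely, `a ↦ 1`, `b ↦ 0`
defines a homomorphism onto `ℤ/n` sending `ab` to a generator, so `n` divides the order.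
-/

theorem orderOf_eq_of_pow_eq_one_of_orderOf_map {G H : Type*} [Monoid G] [Monoid H] {x : G}
    {n : ℕ} (hx : x ^ n = 1) (f : G →* H) (hf : orderOf (f x) = n) : orderOf x = n :=
  Nat.dvd_antisymm (orderOf_dvd_of_pow_eq_one hx) (hf ▸ orderOf_map_dvd f x)

namespace PresentedGroup

variable {α : Type*} {w : FreeGroup α} {n : ℕ}

theorem mk_pow_relator_eq_one : mk {w ^ n} w ^ n = 1 := by
  rw [← map_pow]
  exact one_of_mem rfl

theorem orderOf_mk_of_orderOf_map {H : Type*} [Group H] (f : FreeGroup α →* H)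
    (hf : orderOf (f w) = n) : orderOf (mk {w ^ n} w) = n := by
  have hlift : FreeGroup.lift (f ∘ FreeGroup.of) = f :=
    FreeGroup.ext_hom _ _ fun _ ↦ FreeGroup.lift_apply_of
  have hrel : ∀ r ∈ ({w ^ n} : Set (FreeGroup α)), FreeGroup.lift (f ∘ FreeGroup.of) r = 1 := by
    rintro r rfl
    rw [hlift, map_pow, ← hf, pow_orderOf_eq_one]
  refine orderOf_eq_of_pow_eq_one_of_orderOf_map mk_pow_relator_eq_one (toGroup hrel) ?_
  change orderOf (FreeGroup.lift (f ∘ FreeGroup.of) w) = n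
  rwa [hlift]

end PresentedGroup

theorem orderOf_ab_general (n : ℕ) :
    orderOf ((PresentedGroup.of false * PresentedGroup.of true : HeckoidGroup n)) = n := by
  let f : FreeGroup Bool →* Multiplicative (ZMod n) :=
    FreeGroup.lift fun b ↦ if b then 1 else Multiplicative.ofAdd 1
  have hf : orderOf (f (FreeGroup.of false * FreeGroup.of true)) = n := by
    simp [f, orderOf_ofAdd_eq_addOrderOf]
  exact PresentedGroup.orderOf_mk_of_orderOf_map f hf

/-- In G = ⟨a, b | (ab)^n⟩, the element ab has order exactly n. -/
theorem orderOf_ab (n : ℕ) (hn : 2 ≤ n) :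
    orderOf ((PresentedGroup.of false * PresentedGroup.of true : HeckoidGroup n)) = n :=
  orderOf_ab_general n
end

section
/- Let n ≥ 2 and let G = ⟨a, b | (ab)^n⟩. Suppose v is a nonempty cyclically reduced, cyclically alternating word in {a,b} (i.e., letters with base a and base b alternate around the cyclic word) such that every maximal block of consecutive letters of v (read cyclically) having the same exponent sign has length at most n. Then v represents a nontrivial element of G. -/
/-- A letter: (`false` = a, `true` = b, sign `true` = +1). -/
abbrev Letter : Type := Bool × Bool

/-!
The map `a ↦ x`, `b ↦ x⁻¹ y` sends `ab` to `y`, so it identifies `G` with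
`ℤ * ℤ/n = ⟨x⟩ * ⟨y⟩`. Each letter `b^{±1}` of `v` contributes one `y^{±1}`, and the exponent
of `x` between two consecutive ones vanishes exactly when they enclose a same-sign run
`b^s a^s b^s`. So the image of `v` reduces to syllables `y^{±c}`, one for each same-sign run of
length `2c - 1 ≤ n` (hence `0 < c < n`), separated by nonzero powers of `x`: a nonempty reduced
word, hence `≠ 1`.
-/

theorem Monoid.CoprodI.list_prod_ne_one_of_reduced {ι : Type*} {M : ι → Type*}
    [∀ i, Monoid (M i)] {l : List (Σ i, M i)} (hne : l ≠ []) (hone : ∀ p ∈ l, p.2 ≠ 1)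
    (hchain : l.IsChain fun p q => p.1 ≠ q.1) : (l.map fun p => of p.2).prod ≠ 1 := by
  classical
  intro h
  have : (⟨l, hone, hchain⟩ : Word M) = .empty :=
    Word.equiv.symm.injective (h.trans Word.prod_empty.symm)
  exact hne (congrArg Word.toList this)

theorem List.IsInfix.exists_isPrefix_rotate {α : Type*} {w l : List α} (h : w <:+: l) :
    ∃ k, w <+: l.rotate k := by
  obtain ⟨s, t, rfl⟩ := h
  refine ⟨s.length, ?_⟩
  rw [append_assoc, rotate_append_length_eq, append_assoc]
  exact prefix_append _ _

namespace HeckoidGroup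

/-- `ℤ * ℤ/n`: factor `false` is `ZMod 0 = ℤ`, generated by `x`; factor `true` by `y`. -/
abbrev FreeProd (n : ℕ) : Type :=
  Monoid.CoprodI fun i : Bool => Multiplicative (ZMod (cond i n 0))

def syllable (n : ℕ) (i : Bool) (k : ℤ) : FreeProd n :=
  Monoid.CoprodI.of (i := i) (Multiplicative.ofAdd (k : ZMod (cond i n 0)))

variable {n : ℕ}

theorem syllable_mul_syllable (i : Bool) (j k : ℤ) :
    syllable n i j * syllable n i k = syllable n i (j + k) := by
  rw [syllable, syllable, syllable, ← map_mul, ← ofAdd_add, Int.cast_add]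

theorem syllable_mul_syllable_mul (i : Bool) (j k : ℤ) (g : FreeProd n) :
    syllable n i j * (syllable n i k * g) = syllable n i (j + k) * g := by
  rw [← mul_assoc, syllable_mul_syllable]

@[simp] theorem syllable_zero (i : Bool) : syllable n i 0 = 1 := by
  simp [syllable]

theorem syllable_inv (i : Bool) (k : ℤ) : (syllable n i k)⁻¹ = syllable n i (-k) :=
  inv_eq_of_mul_eq_one_right (by rw [syllable_mul_syllable, add_neg_cancel, syllable_zero])

def gens (n : ℕ) : Bool → FreeProd n
  | false => syllable n false 1
  | true => syllable n false (-1) * syllable n true 1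

def toFreeProd (n : ℕ) : FreeGroup Bool →* FreeProd n := FreeGroup.lift (gens n)

theorem toFreeProd_heckoidRel : toFreeProd n (heckoidRel n) = 1 := by
  have hab : gens n false * gens n true = syllable n true 1 := by
    rw [gens, gens, syllable_mul_syllable_mul, add_neg_cancel, syllable_zero, one_mul]
  rw [heckoidRel, map_pow, map_mul, toFreeProd, FreeGroup.lift_apply_of,
    FreeGroup.lift_apply_of, hab, syllable, ← map_pow, ← ofAdd_nsmul]
  simp

theorem toFreeProd_eq_one {x : FreeGroup Bool}
    (h : PresentedGroup.mk ({heckoidRel n} : Set (FreeGroup Bool)) x = 1) :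
    toFreeProd n x = 1 :=
  PresentedGroup.to_group_eq_one_of_mem_closure
    (by rintro r rfl; exact toFreeProd_heckoidRel) x ((QuotientGroup.eq_one_iff _).mp h)

@[simp] theorem toFreeProd_mk_nil : toFreeProd n (FreeGroup.mk []) = 1 := by
  rw [← FreeGroup.one_eq_mk, map_one]

def expSign (s : Bool) : ℤ := cond s 1 (-1)

theorem toFreeProd_mk_cons_a (e : Bool) (u : List Letter) :
    toFreeProd n (FreeGroup.mk ((false, e) :: u)) =
      syllable n false (expSign e) * toFreeProd n (FreeGroup.mk u) := by
  cases e <;> simp [toFreeProd, FreeGroup.lift_mk, gens, expSign, syllable_inv]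

theorem toFreeProd_mk_cons_b (f : Bool) (u : List Letter) :
    toFreeProd n (FreeGroup.mk ((true, f) :: u)) =
      syllable n false (-f.toNat) * (syllable n true (expSign f) *
        (syllable n false (!f).toNat * toFreeProd n (FreeGroup.mk u))) := by
  cases f <;> simp [toFreeProd, FreeGroup.lift_mk, gens, expSign, syllable_inv, mul_assoc]

/-- `R` lists the syllables `(factor, exponent)` of a reduced word of `ℤ * ℤ/n`. -/
def IsReduced (n : ℕ) (R : List (Bool × ℤ)) : Prop :=
  R.IsChain (fun p q => p.1 ≠ q.1) ∧ ∀ p ∈ R, (p.2 : ZMod (cond p.1 n 0)) ≠ 0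

def evalWord (n : ℕ) (R : List (Bool × ℤ)) : FreeProd n :=
  (R.map fun p => syllable n p.1 p.2).prod

@[simp] theorem evalWord_nil : evalWord n [] = 1 := rfl

@[simp] theorem evalWord_cons (p : Bool × ℤ) (R : List (Bool × ℤ)) :
    evalWord n (p :: R) = syllable n p.1 p.2 * evalWord n R := List.prod_cons

theorem IsReduced.evalWord_ne_one {R : List (Bool × ℤ)} (h : IsReduced n R) (hne : R ≠ []) :
    evalWord n R ≠ 1 := by
  have := Monoid.CoprodI.list_prod_ne_one_of_reduced
    (M := fun i => Multiplicative (ZMod (cond i n 0)))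
    (l := R.map fun p => ⟨p.1, Multiplicative.ofAdd (p.2 : ZMod (cond p.1 n 0))⟩)
    (by simpa using hne) (by
      simp only [List.mem_map]
      rintro _ ⟨p, hp, rfl⟩
      simpa using h.2 p hp)
    (by simpa [List.isChain_map] using h.1)
  simpa [evalWord, syllable, Function.comp_def] using this

theorem isReduced_nil : IsReduced n [] := ⟨.nil, by simp⟩

theorem isReduced_cons {p : Bool × ℤ} {R : List (Bool × ℤ)} :
    IsReduced n (p :: R) ↔
      (∀ q ∈ R.head?, p.1 ≠ q.1) ∧ (p.2 : ZMod (cond p.1 n 0)) ≠ 0 ∧ IsReduced n R := by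
  simp only [IsReduced, List.isChain_cons, List.mem_cons, forall_eq_or_imp]
  tauto

def consX (k : ℤ) (R : List (Bool × ℤ)) : List (Bool × ℤ) :=
  if k = 0 then R else (false, k) :: R

theorem evalWord_consX (k : ℤ) (R : List (Bool × ℤ)) :
    evalWord n (consX k R) = syllable n false k * evalWord n R := by
  unfold consX; split_ifs with hk <;> simp [hk]

theorem IsReduced.consX {R : List (Bool × ℤ)} (h : IsReduced n R)
    (hR : ∀ q ∈ R.head?, q.1 = true) (k : ℤ) : IsReduced n (consX k R) := by
  unfold HeckoidGroup.consX
  split_ifs with hk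
  · exact h
  · exact isReduced_cons.2 ⟨fun q hq => by simp [hR q hq], by simpa using hk, h⟩

theorem consX_ne_nil {R : List (Bool × ℤ)} (hR : R ≠ []) (k : ℤ) : consX k R ≠ [] := by
  unfold consX; split_ifs <;> simp [hR]

theorem expSign_mul_ne_zero (s : Bool) {c : ℕ} (hc : 0 < c) (hcn : c < n) :
    ((expSign s * c : ℤ) : ZMod (cond true n 0)) ≠ 0 := by
  have : (c : ZMod n) ≠ 0 := by
    rw [Ne, ZMod.natCast_eq_zero_iff]
    exact fun hdvd => absurd (Nat.le_of_dvd hc hdvd) (by omega)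
  cases s <;> simpa [expSign] using this

theorem gap_eq_zero_iff {f e f' : Bool} :
    ((!f).toNat : ℤ) + expSign e - f'.toNat = 0 ↔ f = e ∧ e = f' := by
  cases f <;> cases e <;> cases f' <;> decide

def Alternating (u : List Letter) : Prop :=
  u.IsChain fun x y => x.1 ≠ y.1

def SignRunsLE (n : ℕ) (u : List Letter) : Prop :=
  ∀ (s : Bool) (w : List Letter), w <:+: u → (∀ l ∈ w, l.2 = s) → w.length ≤ n

theorem SignRunsLE.of_suffix {u u' : List Letter} (h : SignRunsLE n u) (hu : u' <:+ u) :
    SignRunsLE n u' :=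
  fun s w hw => h s w (hw.trans hu.isInfix)

/-- A word starting with `b^f` maps to `x^{-[f]}` times a reduced word whose first syllable is
`y^{±c}`; that syllable is contributed by the sign run `b^f a^f ⋯ b^f` of length `2c - 1`
beginning the word, which is why `c < n`. -/
theorem exists_reduced_of_cons_b (hn : 2 ≤ n) : ∀ (f : Bool) (t : List Letter),
    Alternating ((true, f) :: t) → SignRunsLE n ((true, f) :: t) →
    ∃ (c : ℕ) (T : List (Bool × ℤ)) (w : List Letter),
      w <+: (true, f) :: t ∧ (∀ l ∈ w, l.2 = f) ∧ w.length + 1 = 2 * c ∧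
      IsReduced n ((true, expSign f * c) :: T) ∧
      toFreeProd n (FreeGroup.mk ((true, f) :: t)) =
        syllable n false (-f.toNat) * evalWord n ((true, expSign f * c) :: T)
  | f, [], _, _ => by
    refine ⟨1, consX (!f).toNat [], [(true, f)], List.prefix_refl _, by simp, rfl, ?_, ?_⟩
    · exact isReduced_cons.2 ⟨by cases f <;> simp [consX], expSign_mul_ne_zero f one_pos hn,
        isReduced_nil.consX (by simp) _⟩
    · simp [toFreeProd_mk_cons_b, evalWord_consX]
  | f, [(false, e)], _, _ => by
    refine ⟨1, consX ((!f).toNat + expSign e) [], [(true, f)], by simp, by simp, rfl, ?_, ?_⟩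
    · exact isReduced_cons.2 ⟨by cases f <;> cases e <;> simp [consX, expSign],
        expSign_mul_ne_zero f one_pos hn, isReduced_nil.consX (by simp) _⟩
    · simp [toFreeProd_mk_cons_b, toFreeProd_mk_cons_a, evalWord_consX, syllable_mul_syllable]
  | f, (false, e) :: (true, f') :: t, halt, hruns => by
    obtain ⟨c, T, w, hw, hws, hwlen, hred, himg⟩ :=
      exists_reduced_of_cons_b hn f' t halt.tail.tail
        (hruns.of_suffix ((List.suffix_cons _ _).trans (List.suffix_cons _ _)))
    have himg' : toFreeProd n (FreeGroup.mk ((true, f) :: (false, e) :: (true, f') :: t)) =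
        syllable n false (-f.toNat) * (syllable n true (expSign f) *
          (syllable n false ((!f).toNat + expSign e - f'.toNat) *
            evalWord n ((true, expSign f' * c) :: T))) := by
      rw [toFreeProd_mk_cons_b, toFreeProd_mk_cons_a, himg, syllable_mul_syllable_mul,
        syllable_mul_syllable_mul, sub_eq_add_neg]
    by_cases hgap : ((!f).toNat : ℤ) + expSign e - f'.toNat = 0
    · obtain ⟨rfl, rfl⟩ := gap_eq_zero_iff.1 hgap
      have hpre : (true, f) :: (false, f) :: w <+: (true, f) :: (false, f) :: (true, f) :: t :=
        List.cons_prefix_cons.2 ⟨rfl, List.cons_prefix_cons.2 ⟨rfl, hw⟩⟩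
      have hrun := hruns f _ hpre.isInfix (by simpa using hws)
      refine ⟨c + 1, T, _, hpre, by simpa using hws, by simp; omega, ?_, ?_⟩
      · obtain ⟨hhead, -, hT⟩ := isReduced_cons.1 hred
        exact isReduced_cons.2
          ⟨hhead, expSign_mul_ne_zero f (by omega) (by simp at hrun; omega), hT⟩
      · rw [himg', hgap, syllable_zero, one_mul, evalWord_cons, evalWord_cons,
          syllable_mul_syllable_mul]
        push_cast
        ring_nf
    · refine ⟨1, (false, (!f).toNat + expSign e - f'.toNat) :: (true, expSign f' * c) :: T,
        [(true, f)], by simp, by simp, rfl, ?_, ?_⟩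
      · exact isReduced_cons.2 ⟨by simp, expSign_mul_ne_zero f one_pos hn,
          isReduced_cons.2 ⟨by simp, hgap, hred⟩⟩
      · rw [himg']
        simp
  | _, (true, _) :: _, halt, _ => by simp [Alternating] at halt
  | _, (false, _) :: (false, _) :: _, halt, _ => by simp [Alternating] at halt

theorem toFreeProd_mk_ne_one (hn : 2 ≤ n) : ∀ {u : List Letter},
    u ≠ [] → Alternating u → SignRunsLE n u → toFreeProd n (FreeGroup.mk u) ≠ 1
  | (true, f) :: t, _, halt, hruns => by
    obtain ⟨c, T, -, -, -, -, hred, himg⟩ := exists_reduced_of_cons_b hn f t halt hruns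
    rw [himg, ← evalWord_consX]
    exact (hred.consX (by simp) _).evalWord_ne_one (consX_ne_nil (by simp) _)
  | [(false, e)], _, _, _ => by
    have hred : IsReduced n [(false, expSign e)] :=
      isReduced_cons.2 ⟨by simp, by cases e <;> simp [expSign], isReduced_nil⟩
    simpa [toFreeProd_mk_cons_a] using hred.evalWord_ne_one (List.cons_ne_nil _ _)
  | (false, e) :: (true, f) :: t, _, halt, hruns => by
    obtain ⟨c, T, -, -, -, -, hred, himg⟩ :=
      exists_reduced_of_cons_b hn f t halt.tail (hruns.of_suffix (List.suffix_cons _ _))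
    rw [toFreeProd_mk_cons_a, himg, syllable_mul_syllable_mul, ← evalWord_consX]
    exact (hred.consX (by simp) _).evalWord_ne_one (consX_ne_nil (by simp) _)
  | (false, _) :: (false, _) :: _, _, halt, _ => by simp [Alternating] at halt

end HeckoidGroup

open HeckoidGroup in
theorem alternating_word_nontrivial_general (n : ℕ) (hn : 2 ≤ n) (v : List Letter)
    (hne : v ≠ [])
    (halt : ∀ k : ℕ, List.Chain' (fun x y : Letter => x.1 ≠ y.1) (v.rotate k))
    (hblock : ∀ k : ℕ, ∀ w : List Letter, w <+: v.rotate k →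
      ((∀ x ∈ w, x.2 = true) ∨ (∀ x ∈ w, x.2 = false)) → w.length ≤ n) :
    PresentedGroup.mk ({heckoidRel n} : Set (FreeGroup Bool)) (FreeGroup.mk v) ≠ 1 := by
  intro hone
  refine toFreeProd_mk_ne_one hn hne (List.rotate_zero v ▸ halt 0) (fun s w hw hs => ?_)
    (toFreeProd_eq_one hone)
  obtain ⟨k, hk⟩ := hw.exists_isPrefix_rotate
  exact hblock k w hk (by cases s; exacts [Or.inr hs, Or.inl hs])

/-- If v is a nonempty cyclically reduced, cyclically alternating word in {a,b}
all of whose maximal cyclic same-sign blocks have length at most n, then v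
represents a nontrivial element of G = ⟨a, b | (ab)^n⟩. -/
theorem alternating_word_nontrivial (n : ℕ) (hn : 2 ≤ n) (v : List Letter)
    (hne : v ≠ [])
    (hred : ∀ k : ℕ, List.Chain' (fun x y : Letter => ¬(x.1 = y.1 ∧ x.2 = !y.2))
      (v.rotate k))
    (halt : ∀ k : ℕ, List.Chain' (fun x y : Letter => x.1 ≠ y.1) (v.rotate k))
    (hblock : ∀ k : ℕ, ∀ w : List Letter, w <+: v.rotate k →
      ((∀ x ∈ w, x.2 = true) ∨ (∀ x ∈ w, x.2 = false)) → w.length ≤ n) :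
    PresentedGroup.mk ({heckoidRel n} : Set (FreeGroup Bool)) (FreeGroup.mk v) ≠ 1 :=
  alternating_word_nontrivial_general n hn v hne halt hblock
end
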